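/- For the 2ODE y'' = -(x²yz - x²z² - xy³ - xy²z - xz² + y³ + y²z + 2yz² - z²)/(y(x² - y)) (writing z = y'), the function I(x,y,z) = e^x·(xz - y²)/(xy - z) is a first integral: D(I) = 0 wherever y ≠ 0, x² ≠ y, and xy ≠ z. -/

import Mathlib

noncomputable def pdx (F : ℝ × ℝ × ℝ → ℝ) (p : ℝ × ℝ × ℝ) : ℝ :=
  deriv (fun t => F (t, p.2.1, p.2.2)) p.1

noncomputable def pdy (F : ℝ × ℝ × ℝ → ℝ) (p : ℝ × ℝ × ℝ) : ℝ :=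
  deriv (fun t => F (p.1, t, p.2.2)) p.2.1

noncomputable def pdz (F : ℝ × ℝ × ℝ → ℝ) (p : ℝ × ℝ × ℝ) : ℝ :=
  deriv (fun t => F (p.1, p.2.1, t)) p.2.2

/-- The Cartan vector field `D = ∂ₓ + z ∂_y + φ ∂_z` of `y'' = φ(x,y,y')`. -/
noncomputable def Dtot (φ F : ℝ × ℝ × ℝ → ℝ) (p : ℝ × ℝ × ℝ) : ℝ :=
  pdx F p + p.2.2 * pdy F p + φ p * pdz F p

/-- Evaluation of a polynomial in three variables at a point of ℝ³. -/
noncomputable def mev (P : MvPolynomial (Fin 3) ℝ) (p : ℝ × ℝ × ℝ) : ℝ :=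
  MvPolynomial.eval ![p.1, p.2.1, p.2.2] P

noncomputable def phi14 (p : ℝ × ℝ × ℝ) : ℝ :=
  -(p.1 ^ 2 * p.2.1 * p.2.2 - p.1 ^ 2 * p.2.2 ^ 2 - p.1 * p.2.1 ^ 3
      - p.1 * p.2.1 ^ 2 * p.2.2 - p.1 * p.2.2 ^ 2 + p.2.1 ^ 3
      + p.2.1 ^ 2 * p.2.2 + 2 * p.2.1 * p.2.2 ^ 2 - p.2.2 ^ 2)
    / (p.2.1 * (p.1 ^ 2 - p.2.1))

noncomputable def I14 (p : ℝ × ℝ × ℝ) : ℝ :=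
  Real.exp p.1 * (p.1 * p.2.2 - p.2.1 ^ 2) / (p.1 * p.2.1 - p.2.2)

/-!
Over the common denominator `(xy - z)²`, the partial derivatives of `I` are
`∂ₓI = eˣ·A`, `∂_y I = eˣ·B` and `∂_z I = eˣ·y(x² - y)`, where `A + zB` is exactly the
numerator `N` of `φ = -N / (y(x² - y))`. Hence `D(I) = eˣ (N + φ·y(x² - y)) / (xy - z)² = 0`.
-/

open Real

section PartialDerivatives

variable {x y z : ℝ}

theorem hasDerivAt_I14_x (hd : x * y - z ≠ 0) :
    HasDerivAt (fun t => I14 (t, y, z))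
      (exp x * (x ^ 2 * y * z - x * z ^ 2 - x * y ^ 3 + y ^ 2 * z - z ^ 2 + y ^ 3)
        / (x * y - z) ^ 2) x := by
  have hlin : HasDerivAt (fun t => t * z - y ^ 2) z x := by
    simpa using ((hasDerivAt_id x).mul_const z).sub_const (y ^ 2)
  have hnum : HasDerivAt (fun t => exp t * (t * z - y ^ 2))
      (exp x * (x * z - y ^ 2) + exp x * z) x :=
    (hasDerivAt_exp x).mul hlin
  have hden : HasDerivAt (fun t => t * y - z) y x := by
    simpa using ((hasDerivAt_id x).mul_const y).sub_const z
  refine (hnum.div hden hd).congr_deriv ?_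
  field_simp
  ring

theorem hasDerivAt_I14_y (hd : x * y - z ≠ 0) :
    HasDerivAt (fun t => I14 (x, t, z))
      (exp x * (2 * y * z - x * y ^ 2 - x ^ 2 * z) / (x * y - z) ^ 2) y := by
  have hnum : HasDerivAt (fun t => exp x * (x * z - t ^ 2)) (exp x * -(2 * y)) y := by
    simpa using ((hasDerivAt_pow 2 y).const_sub (x * z)).const_mul (exp x)
  have hden : HasDerivAt (fun t => x * t - z) x y := by
    simpa using ((hasDerivAt_id y).const_mul x).sub_const z
  refine (hnum.div hden hd).congr_deriv ?_
  field_simp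
  ring

theorem hasDerivAt_I14_z (hd : x * y - z ≠ 0) :
    HasDerivAt (fun t => I14 (x, y, t))
      (exp x * (y * (x ^ 2 - y)) / (x * y - z) ^ 2) z := by
  have hnum : HasDerivAt (fun t => exp x * (x * t - y ^ 2)) (exp x * x) z := by
    simpa using (((hasDerivAt_id z).const_mul x).sub_const (y ^ 2)).const_mul (exp x)
  have hden : HasDerivAt (fun t => x * y - t) (-1) z := by
    simpa using (hasDerivAt_id z).const_sub (x * y)
  refine (hnum.div hden hd).congr_deriv ?_
  field_simp
  ring

end PartialDerivatives

theorem phi14_mul_denom {x y z : ℝ} (hy : y ≠ 0) (hxy : x ^ 2 - y ≠ 0) :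
    phi14 (x, y, z) * (y * (x ^ 2 - y)) =
      -(x ^ 2 * y * z - x ^ 2 * z ^ 2 - x * y ^ 3 - x * y ^ 2 * z - x * z ^ 2 + y ^ 3
        + y ^ 2 * z + 2 * y * z ^ 2 - z ^ 2) := by
  unfold phi14
  field_simp

/-- I = eˣ·(xz - y²)/(xy - z) is a first integral of the 2ODE (\ref{2odeexqequalN}). -/
theorem I14_first_integral :
    ∀ p : ℝ × ℝ × ℝ, p.2.1 ≠ 0 → p.1 ^ 2 - p.2.1 ≠ 0 → p.1 * p.2.1 - p.2.2 ≠ 0 →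
      Dtot phi14 I14 p = 0 := by
  rintro ⟨x, y, z⟩ hy hxy hd
  calc Dtot phi14 I14 (x, y, z)
      = exp x / (x * y - z) ^ 2 *
          ((x ^ 2 * y * z - x ^ 2 * z ^ 2 - x * y ^ 3 - x * y ^ 2 * z - x * z ^ 2 + y ^ 3
            + y ^ 2 * z + 2 * y * z ^ 2 - z ^ 2) + phi14 (x, y, z) * (y * (x ^ 2 - y))) := by
        rw [Dtot, pdx, pdy, pdz, (hasDerivAt_I14_x hd).deriv, (hasDerivAt_I14_y hd).deriv,
          (hasDerivAt_I14_z hd).deriv]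
        ring
    _ = 0 := by
        rw [phi14_mul_denom hy hxy]
        ring
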